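/- arXiv:1803.01696 — 3 statements merged into one kernel-verified Lean document; each statement's English description precedes it below -/
import Mathlib

section
/- Let M and M' be image-finite epistemic models (every equivalence class of every ∼_a and ∼'_a is finite), and let R ⊆ S × S' be the relation defined by (s,s') ∈ R iff for every positive formula φ ∈ L_EL⁺, M_s ⊨ φ implies M'_{s'} ⊨ φ. If R is nonempty, then R is a refinement from M to M'. -/
/-- An epistemic (S5) model. -/
structure EpiModel (A P : Type) where
  S : Type
  ne : Nonempty S
  rel : A → S → S → Prop
  equiv : ∀ a, Equivalence (rel a)
  val : P → Set S

/-- The language L_EL of epistemic logic. -/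
inductive ELForm (A P : Type) where
  | atom : P → ELForm A P
  | neg : ELForm A P → ELForm A P
  | and : ELForm A P → ELForm A P → ELForm A P
  | know : A → ELForm A P → ELForm A P

/-- Satisfaction of epistemic formulas. -/
def ELForm.sat {A P : Type} (M : EpiModel A P) : ELForm A P → M.S → Prop
  | .atom p, s => s ∈ M.val p
  | .neg φ, s => ¬ ELForm.sat M φ s
  | .and φ ψ, s => ELForm.sat M φ s ∧ ELForm.sat M ψ s
  | .know a φ, s => ∀ t, M.rel a s t → ELForm.sat M φ t

/-- Positive formulas L_EL⁺. -/
inductive PosForm (A P : Type) where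
  | atom : P → PosForm A P
  | natom : P → PosForm A P
  | and : PosForm A P → PosForm A P → PosForm A P
  | or : PosForm A P → PosForm A P → PosForm A P
  | know : A → PosForm A P → PosForm A P

/-- Satisfaction of positive formulas. -/
def PosForm.sat {A P : Type} (M : EpiModel A P) : PosForm A P → M.S → Prop
  | .atom p, s => s ∈ M.val p
  | .natom p, s => s ∉ M.val p
  | .and φ ψ, s => PosForm.sat M φ s ∧ PosForm.sat M ψ s
  | .or φ ψ, s => PosForm.sat M φ s ∨ PosForm.sat M ψ s
  | .know a φ, s => ∀ t, M.rel a s t → PosForm.sat M φ t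

/-- A refinement from `M` to `M'`: a nonempty relation satisfying **atoms**
and **back**. -/
def IsRefinement {A P : Type} (M M' : EpiModel A P) (R : M.S → M'.S → Prop) : Prop :=
  (∃ s s', R s s') ∧
  ∀ s s', R s s' →
    (∀ p, s ∈ M.val p ↔ s' ∈ M'.val p) ∧
    (∀ a t', M'.rel a s' t' → ∃ t, M.rel a s t ∧ R t t')

/-- `M_t` is a refinement of `M_s` (within the single model `M`). -/
def RefinesIn {A P : Type} (M : EpiModel A P) (s t : M.S) : Prop :=
  ∃ R, IsRefinement M M R ∧ R s t

/-
The atoms clause is witnessed by the formulas `p` and `¬p`. For **back**, suppose `t' ∼_a s'` is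
related to no `a`-successor of `s`. Then each of the finitely many `t ∼_a s` has a positive formula
`φ_t` true at `t` and false at `t'`, so `K_a (⋁_t φ_t)` holds at `s`, hence at `s'`, hence
`⋁_t φ_t` holds at `t'`: a contradiction. The disjunction is nonempty since `s ∼_a s`, which
matters because no positive formula plays the role of `⊤`.
-/

namespace PosForm

variable {A P : Type}

def Implies (M M' : EpiModel A P) (s : M.S) (s' : M'.S) : Prop :=
  ∀ φ : PosForm A P, φ.sat M s → φ.sat M' s'

theorem Implies.val_iff {M M' : EpiModel A P} {s : M.S} {s' : M'.S} (h : Implies M M' s s')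
    (p : P) : s ∈ M.val p ↔ s' ∈ M'.val p :=
  ⟨h (.atom p), fun hs' => by_contra fun hs => h (.natom p) hs hs'⟩

theorem exists_forall_sat_not_sat_of_finset {M M' : EpiModel A P} {T : Finset M.S}
    (hT : T.Nonempty) {t' : M'.S} (h : ∀ t ∈ T, ∃ φ : PosForm A P, φ.sat M t ∧ ¬ φ.sat M' t') :
    ∃ φ : PosForm A P, (∀ t ∈ T, φ.sat M t) ∧ ¬ φ.sat M' t' := by
  induction hT using Finset.Nonempty.cons_induction with
  | singleton t => simpa using h t (Finset.mem_singleton_self t)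
  | cons t T _ _ ih =>
    obtain ⟨φ, hφt, hφt'⟩ := h t (Finset.mem_cons_self t T)
    obtain ⟨ψ, hψT, hψt'⟩ := ih fun u hu => h u (Finset.mem_cons_of_mem hu)
    refine ⟨.or φ ψ, ?_, by simp only [sat]; tauto⟩
    simp only [Finset.forall_mem_cons, sat]
    exact ⟨Or.inl hφt, fun u hu => Or.inr (hψT u hu)⟩

theorem Implies.exists_back {M M' : EpiModel A P} {a : A} {s : M.S} {s' : M'.S}
    (hfin : {t | M.rel a s t}.Finite) (h : Implies M M' s s') {t' : M'.S}
    (ht' : M'.rel a s' t') : ∃ t, M.rel a s t ∧ Implies M M' t t' := by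
  by_contra! hno
  have hT : hfin.toFinset.Nonempty := ⟨s, by simpa using (M.equiv a).refl s⟩
  obtain ⟨φ, hφT, hφt'⟩ := exists_forall_sat_not_sat_of_finset hT (t' := t') fun t ht => by
    simpa [Implies] using hno t (by simpa using ht)
  exact hφt' (h (.know a φ) (fun t ht => hφT t (by simpa using ht)) t' ht')

end PosForm

theorem positive_implication_is_refinement_general
    (A P : Type) (M M' : EpiModel A P)
    (hfin : ∀ (a : A) (s : M.S), {t | M.rel a s t}.Finite)
    (R : M.S → M'.S → Prop)
    (hR : ∀ s s', R s s' ↔ ∀ φ : PosForm A P, PosForm.sat M φ s → PosForm.sat M' φ s')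
    (hne : ∃ s s', R s s') :
    IsRefinement M M' R := by
  have hR : ∀ s s', R s s' ↔ PosForm.Implies M M' s s' := hR
  refine ⟨hne, fun s s' hss' => ⟨((hR s s').1 hss').val_iff, fun a t' ht' => ?_⟩⟩
  obtain ⟨t, hst, htt'⟩ := ((hR s s').1 hss').exists_back (hfin a s) ht'
  exact ⟨t, hst, (hR t t').2 htt'⟩

/-- On image-finite models, the relation relating `s` to `s'`
iff every positive formula true at `M_s` is true at `M'_{s'}` is, when
nonempty, a refinement from `M` to `M'`. -/
theorem positive_implication_is_refinement
    (A P : Type) (M M' : EpiModel A P)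
    (hfin : ∀ (a : A) (s : M.S), {t | M.rel a s t}.Finite)
    (hfin' : ∀ (a : A) (s' : M'.S), {t' | M'.rel a s' t'}.Finite)
    (R : M.S → M'.S → Prop)
    (hR : ∀ s s', R s s' ↔ ∀ φ : PosForm A P, PosForm.sat M φ s → PosForm.sat M' φ s')
    (hne : ∃ s s', R s s') :
    IsRefinement M M' R :=
  positive_implication_is_refinement_general A P M M' hfin R hR hne
end

section
/- The result of any positive announcement is closed under refinements: for every epistemic model M and every positive formula φ ∈ L_EL⁺, the set ⟦φ⟧_M = {s ∈ S : M_s ⊨ φ} is closed under refinements in M, i.e., for all s, t ∈ S such that M_t is a refinement of M_s, if M_s ⊨ φ then M_t ⊨ φ. -/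

lemma pos_sat_refinement {A P : Type} (M : EpiModel A P) (R : M.S → M.S → Prop)
    (hR : IsRefinement M M R) (φ : PosForm A P) :
    ∀ s t, R s t → PosForm.sat M φ s → PosForm.sat M φ t := by
  induction φ with
  | atom p => intro s t hst hs; exact ((hR.2 s t hst).1 p).mp hs
  | natom p => intro s t hst hs; exact fun h => hs (((hR.2 s t hst).1 p).mpr h)
  | and φ ψ ihφ ihψ => intro s t hst hs; exact ⟨ihφ s t hst hs.1, ihψ s t hst hs.2⟩
  | or φ ψ ihφ ihψ =>
      intro s t hst hs
      cases hs with
      | inl h => exact Or.inl (ihφ s t hst h)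
      | inr h => exact Or.inr (ihψ s t hst h)
  | know a φ ih =>
      intro s t hst hs u hru
      obtain ⟨u', hu', hR'⟩ := (hR.2 s t hst).2 a u hru
      exact ih u' u hR' (hs u' hu')

/-- The result of any positive announcement is closed under
refinements: for every positive φ, the set `⟦φ⟧_M` is closed under refinements
in `M`: for all `s t`, if `M_t` is a refinement of `M_s` and `M_s ⊨ φ` then
`M_t ⊨ φ`. -/
theorem positive_announcement_closed_under_refinements
    (A P : Type) (M : EpiModel A P) (φ : PosForm A P)
    (s t : M.S) (href : RefinesIn M s t) (hs : PosForm.sat M φ s) :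
    PosForm.sat M φ t := by
  obtain ⟨R, hR, hst⟩ := href
  exact pos_sat_refinement M R hR φ s t hst hs
end

section
/- Let M = (ℕ, ∼, V) be a one-edged infinite a-b-chain, i.e., ∼_a is the reflexive-symmetric closure of {(2n, 2n+1) : n ∈ ℕ}, ∼_b is the reflexive-symmetric closure of {(2n+1, 2n+2) : n ∈ ℕ}, and V is arbitrary. Suppose there is an epistemic formula δ₀ ∈ L_EL such that M_0 ⊨ δ₀ and M_i ⊭ δ₀ for all i > 0. Then every finite subset B ⊆ ℕ has a distinguishing formula: there exists δ_B ∈ L_EL such that M_i ⊨ δ_B for all i ∈ B and M_i ⊭ δ_B for all i ∉ B. -/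
/-- The epistemic model with domain ℕ determined by relations `rel` and
valuation `V`. -/
abbrev natChainModel (A P : Type) (rel : A → ℕ → ℕ → Prop)
    (hequiv : ∀ c, Equivalence (rel c)) (V : P → Set ℕ) : EpiModel A P :=
  ⟨ℕ, ⟨0⟩, rel, hequiv, V⟩

/-- Let `M = (ℕ, ∼, V)` be a one-edged infinite a-b-chain:
`∼_a` is the reflexive-symmetric closure of `{(2n, 2n+1) : n ∈ ℕ}` and `∼_b`
is the reflexive-symmetric closure of `{(2n+1, 2n+2) : n ∈ ℕ}`, with `V`
arbitrary. If some epistemic formula `δ₀` is true at state `0` and false at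
every other state, then every finite `B ⊆ ℕ` has a distinguishing epistemic
formula `δ_B`: true exactly at the states in `B`. -/
theorem chain_distinguishing_formulas
    (A P : Type) [Countable P] (a b : A) (hab : a ≠ b)
    (rel : A → ℕ → ℕ → Prop) (hequiv : ∀ c, Equivalence (rel c))
    (hrela : ∀ m n : ℕ, rel a m n ↔
      (m = n ∨ ∃ i, (m = 2*i ∧ n = 2*i+1) ∨ (n = 2*i ∧ m = 2*i+1)))
    (hrelb : ∀ m n : ℕ, rel b m n ↔
      (m = n ∨ ∃ i, (m = 2*i+1 ∧ n = 2*i+2) ∨ (n = 2*i+1 ∧ m = 2*i+2)))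
    (V : P → Set ℕ)
    (δ₀ : ELForm A P)
    (h0 : ELForm.sat (natChainModel A P rel hequiv V) δ₀ 0)
    (hother : ∀ i : ℕ, 0 < i → ¬ ELForm.sat (natChainModel A P rel hequiv V) δ₀ i)
    (B : Set ℕ) (hB : B.Finite) :
    ∃ δB : ELForm A P, ∀ i : ℕ,
      ELForm.sat (natChainModel A P rel hequiv V) δB i ↔ i ∈ B := by
  set M := natChainModel A P rel hequiv V with hM
  -- singleton formulas
  let sing : ℕ → ELForm A P := fun n => Nat.rec δ₀
    (fun n ih => .and (.neg ih) (.neg (.know (if n % 2 = 0 then a else b) (.neg ih)))) n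
  have hsing : ∀ n : ℕ, ∀ i : ℕ, ELForm.sat M (sing n) i ↔ i = n := by
    intro n
    induction n with
    | zero =>
      intro i
      constructor
      · intro h
        by_contra hne
        exact hother i (Nat.pos_of_ne_zero hne) h
      · rintro rfl; exact h0
    | succ n ih =>
      intro i
      have step : ELForm.sat M (sing (n+1)) i ↔
          (¬ ELForm.sat M (sing n) i ∧
            ¬ ∀ t, rel (if n % 2 = 0 then a else b) i t → ¬ ELForm.sat M (sing n) t) :=
        Iff.rfl
      rw [step]
      have hnb : (¬ ∀ t, rel (if n % 2 = 0 then a else b) i t → ¬ ELForm.sat M (sing n) t)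
          ↔ rel (if n % 2 = 0 then a else b) i n := by
        constructor
        · intro h
          push_neg at h
          obtain ⟨t, ht, hs⟩ := h
          rw [ih t] at hs
          exact hs ▸ ht
        · intro h hc
          exact hc n h ((ih n).mpr rfl)
      rw [hnb, ih i]
      by_cases hpar : n % 2 = 0
      · rw [if_pos hpar, hrela]
        constructor
        · rintro ⟨hne, (rfl | ⟨j, ⟨h1, h2⟩ | ⟨h1, h2⟩⟩)⟩ <;> omega
        · rintro rfl
          exact ⟨by omega, Or.inr ⟨n/2, Or.inr ⟨by omega, by omega⟩⟩⟩
      · rw [if_neg hpar, hrelb]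
        constructor
        · rintro ⟨hne, (rfl | ⟨j, ⟨h1, h2⟩ | ⟨h1, h2⟩⟩)⟩ <;> omega
        · rintro rfl
          exact ⟨by omega, Or.inr ⟨n/2, Or.inr ⟨by omega, by omega⟩⟩⟩
  -- finite disjunction
  let bigOr : List ℕ → ELForm A P := fun l =>
    l.foldr (fun n acc => .neg (.and (.neg (sing n)) (.neg acc))) (.and δ₀ (.neg δ₀))
  have hbig : ∀ l : List ℕ, ∀ i : ℕ, ELForm.sat M (bigOr l) i ↔ i ∈ l := by
    intro l
    induction l with
    | nil =>
      intro i
      simp only [List.not_mem_nil, iff_false]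
      intro h
      exact h.2 h.1
    | cons n l ih =>
      intro i
      have : ELForm.sat M (bigOr (n :: l)) i ↔
          ¬ (¬ ELForm.sat M (sing n) i ∧ ¬ ELForm.sat M (bigOr l) i) := Iff.rfl
      rw [this, ih, hsing, List.mem_cons]
      tauto
  refine ⟨bigOr hB.toFinset.toList, fun i => ?_⟩
  rw [hbig, Finset.mem_toList, Set.Finite.mem_toFinset]
end
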